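/- Let (t, χ) be a tree decomposition of the constraint family C, and let home be a function assigning to each constraint (e, R) of C a node v of t with e ⊆ χ(v). For a non-root node v with parent p, write α(v) = χ(v) ∩ χ(p), and set α(root) = ∅. Define recursively, for each node v and each function τ : α(v) → A, the quantity cnt(v, τ) as the sum, over all functions b : χ(v) → A with b|α(v) = τ that satisfy every constraint homed at v, of the product over the children c of v of cnt(c, b|α(c)). Then cnt(root, ∅) equals the total number of solutions of C. -/

import Mathlib

open scoped Classical

/-- A constraint over variables `V` and values `A`: a scope `e ⊆ V` together with a
set of functions from `e` to `A`. -/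
structure Constraint (V A : Type) where
  scope : Finset V
  rel : Set ({x // x ∈ scope} → A)

/-- Restriction of a function defined on `t` to a subset `s ⊆ t`. -/
def restrict {V A : Type} {s t : Finset V} (h : s ⊆ t) (g : {x // x ∈ t} → A) :
    {x // x ∈ s} → A :=
  fun x => g ⟨x.1, h x.2⟩

/-- Restriction of a total function `f : V → A` to a subset `s ⊆ V`. -/
def restrictF {V A : Type} (f : V → A) (s : Finset V) : {x // x ∈ s} → A :=
  fun x => f x.1

/-- `f` is a solution of the family of constraints `C`: for every constraint,
the restriction of `f` to its scope belongs to its relation. -/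
def IsSolution {V A ι : Type} (C : ι → Constraint V A) (f : V → A) : Prop :=
  ∀ i, restrictF f (C i).scope ∈ (C i).rel


/-- In a rooted tree given by a parent function, `u` is an ancestor of `w`
(possibly `u = w`) if `u` is obtained from `w` by iterating `parent`. -/
def IsAncestor {m : ℕ} (parent : Fin m → Fin m) (u w : Fin m) : Prop :=
  ∃ n : ℕ, parent^[n] w = u

/-- `z` lies on the unique path between `u` and `w` in the rooted tree given by
`parent`. -/
def OnPath {m : ℕ} (parent : Fin m → Fin m) (u w z : Fin m) : Prop :=
  (IsAncestor parent z u ∨ IsAncestor parent z w) ∧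
    ∀ c, IsAncestor parent c u → IsAncestor parent c w → IsAncestor parent c z

/-- The children of a node `v` in the rooted tree given by `parent` (the root `0` is
nobody's child). -/
def treeChildren {m : ℕ} [NeZero m] (parent : Fin m → Fin m) (v : Fin m) : Finset (Fin m) :=
  Finset.univ.filter fun c => parent c = v ∧ c ≠ 0

/-- The adhesion of a node: `χ(v) ∩ χ(parent v)` for a non-root node, `∅` for the
root. -/
def adhesion {V : Type} [DecidableEq V] {m : ℕ} [NeZero m] (parent : Fin m → Fin m)
    (χ : Fin m → Finset V) (v : Fin m) : Finset V :=
  if v = 0 then ∅ else χ v ∩ χ (parent v)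

theorem adhesion_subset {V : Type} [DecidableEq V] {m : ℕ} [NeZero m] (parent : Fin m → Fin m)
    (χ : Fin m → Finset V) (v : Fin m) : adhesion parent χ v ⊆ χ v := by
  unfold adhesion
  split
  · exact Finset.empty_subset _
  · exact Finset.inter_subset_left

theorem adhesion_child_subset {V : Type} [DecidableEq V] {m : ℕ} [NeZero m]
    (parent : Fin m → Fin m) (χ : Fin m → Finset V) {c v : Fin m}
    (h1 : parent c = v) (h2 : c ≠ 0) : adhesion parent χ c ⊆ χ v := by
  unfold adhesion
  rw [if_neg h2, h1]
  exact Finset.inter_subset_right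

/-- The recursively defined count `cnt(v, τ)`: the sum, over assignments
`b : χ(v) → A` extending `τ` (given on the adhesion of `v`) that satisfy every
constraint homed at `v`, of the product over the children `c` of `v` of
`cnt(c, b|α(c))`. -/
noncomputable def cnt {V A ι : Type} [Fintype V] [DecidableEq V] [Fintype A] [Fintype ι]
    (C : ι → Constraint V A) {m : ℕ} [NeZero m]
    (parent : Fin m → Fin m) (hpar : ∀ i : Fin m, i ≠ 0 → parent i < i)
    (χ : Fin m → Finset V) (home : ι → Fin m)
    (hhome : ∀ j, (C j).scope ⊆ χ (home j))
    (v : Fin m) (τ : {x // x ∈ adhesion parent χ v} → A) : ℕ :=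
  ∑ b : {x // x ∈ χ v} → A,
    if restrict (adhesion_subset parent χ v) b = τ ∧
        (∀ j, ∀ hj : home j = v, restrict (show (C j).scope ⊆ χ v by rw [← hj]; exact hhome j) b ∈ (C j).rel) then
      ∏ c ∈ (treeChildren parent v).attach,
        cnt C parent hpar χ home hhome c.1
          (restrict (adhesion_child_subset parent χ
            (Finset.mem_filter.mp c.2).2.1 (Finset.mem_filter.mp c.2).2.2) b)
    else 0
termination_by m - v.1
decreasing_by
  have hc := (Finset.mem_filter.mp c.2).2
  have hlt : v < c.1 := by
    have h0 := hpar c.1 hc.2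
    rwa [hc.1] at h0
  omega

/-!
Write `cone v` for the set of variables occurring in the bags of the subtree rooted at `v`.
By induction from the leaves, `cnt(v, τ)` counts the assignments of `cone v` that extend `τ`
and satisfy every constraint homed in the subtree of `v`. The inductive step is a gluing
argument: by connectivity, a variable lying in the cones of two different children of `v`, or
in the cone of a child `c` and in `χ(v)`, already lies in `χ(v)`, respectively in `α(c)`. Hence,
once the values `b` on `χ(v)` are fixed, such an assignment is the same as an independent choice,
for each child `c`, of an assignment of `cone c` extending `b|α(c)`. At the root the cone is all
of `V` and every constraint is homed in the tree, so the count is the number of solutions.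
-/

section Tree

variable {m : ℕ} {parent : Fin m → Fin m}

theorem isAncestor_refl (v : Fin m) : IsAncestor parent v v := ⟨0, rfl⟩

theorem isAncestor_parent (v : Fin m) : IsAncestor parent (parent v) v := ⟨1, rfl⟩

theorem IsAncestor.trans {u v w : Fin m} (h₁ : IsAncestor parent u v)
    (h₂ : IsAncestor parent v w) : IsAncestor parent u w := by
  obtain ⟨a, rfl⟩ := h₁
  obtain ⟨b, rfl⟩ := h₂
  exact ⟨a + b, Function.iterate_add_apply _ _ _ _⟩

theorem IsAncestor.total {u₁ u₂ w : Fin m} (h₁ : IsAncestor parent u₁ w)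
    (h₂ : IsAncestor parent u₂ w) : IsAncestor parent u₁ u₂ ∨ IsAncestor parent u₂ u₁ := by
  obtain ⟨a, rfl⟩ := h₁
  obtain ⟨b, rfl⟩ := h₂
  rcases le_total a b with h | h
  · exact .inr ⟨b - a, by rw [← Function.iterate_add_apply, Nat.sub_add_cancel h]⟩
  · exact .inl ⟨a - b, by rw [← Function.iterate_add_apply, Nat.sub_add_cancel h]⟩

variable [NeZero m]

theorem mem_treeChildren {v c : Fin m} : c ∈ treeChildren parent v ↔ parent c = v ∧ c ≠ 0 := by
  simp [treeChildren]

theorem isAncestor_of_mem_treeChildren {v c : Fin m} (hc : c ∈ treeChildren parent v) :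
    IsAncestor parent v c :=
  (mem_treeChildren.1 hc).1 ▸ isAncestor_parent c

theorem lt_of_mem_treeChildren (hpar : ∀ i : Fin m, i ≠ 0 → parent i < i) {v c : Fin m}
    (hc : c ∈ treeChildren parent v) : v < c := by
  obtain ⟨rfl, hc0⟩ := mem_treeChildren.1 hc
  exact hpar c hc0

theorem isAncestor_zero (hpar : ∀ i : Fin m, i ≠ 0 → parent i < i) (w : Fin m) :
    IsAncestor parent 0 w := by
  induction w using WellFoundedLT.induction with
  | _ w ih =>
    rcases eq_or_ne w 0 with rfl | hw
    · exact isAncestor_refl 0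
    · exact (ih _ (hpar w hw)).trans (isAncestor_parent w)

theorem IsAncestor.le (hroot : parent 0 = 0) (hpar : ∀ i : Fin m, i ≠ 0 → parent i < i)
    {u w : Fin m} (h : IsAncestor parent u w) : u ≤ w := by
  obtain ⟨n, rfl⟩ := h
  induction n generalizing w with
  | zero => exact le_rfl
  | succ n ih =>
    refine (ih (w := parent w)).trans ?_
    rcases eq_or_ne w 0 with rfl | hw
    · rw [hroot]
    · exact (hpar w hw).le

theorem not_isAncestor_of_mem_treeChildren (hroot : parent 0 = 0)
    (hpar : ∀ i : Fin m, i ≠ 0 → parent i < i) {v c : Fin m}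
    (hc : c ∈ treeChildren parent v) : ¬IsAncestor parent c v := fun h =>
  (h.le hroot hpar).not_gt (lt_of_mem_treeChildren hpar hc)

theorem eq_or_exists_mem_treeChildren_of_isAncestor (hroot : parent 0 = 0) {v w : Fin m}
    (h : IsAncestor parent v w) :
    w = v ∨ ∃ c ∈ treeChildren parent v, IsAncestor parent c w := by
  obtain ⟨n, rfl⟩ := h
  induction n with
  | zero => exact .inl rfl
  | succ n ih =>
    rw [Function.iterate_succ_apply']
    rcases eq_or_ne (parent^[n] w) 0 with h0 | h0
    · rw [h0, hroot, ← h0]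
      exact ih
    · exact .inr ⟨_, mem_treeChildren.2 ⟨rfl, h0⟩, n, rfl⟩

theorem eq_of_isAncestor_of_mem_treeChildren (hroot : parent 0 = 0)
    (hpar : ∀ i : Fin m, i ≠ 0 → parent i < i) {v c₁ c₂ w : Fin m}
    (hc₁ : c₁ ∈ treeChildren parent v) (hc₂ : c₂ ∈ treeChildren parent v)
    (h₁ : IsAncestor parent c₁ w) (h₂ : IsAncestor parent c₂ w) : c₁ = c₂ := by
  have key : ∀ {d₁ d₂ : Fin m}, d₁ ∈ treeChildren parent v → d₂ ∈ treeChildren parent v →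
      IsAncestor parent d₁ d₂ → d₁ = d₂ := by
    rintro d₁ d₂ hd₁ hd₂ ⟨_ | n, hn⟩
    · exact hn.symm
    · rw [Function.iterate_succ_apply, (mem_treeChildren.1 hd₂).1] at hn
      exact absurd ⟨n, hn⟩ (not_isAncestor_of_mem_treeChildren hroot hpar hd₁)
  rcases h₁.total h₂ with h | h
  · exact key hc₁ hc₂ h
  · exact (key hc₂ hc₁ h).symm

end Tree

section Cone

variable {V : Type} [DecidableEq V] {m : ℕ} {parent : Fin m → Fin m} {χ : Fin m → Finset V}

noncomputable def cone (parent : Fin m → Fin m) (χ : Fin m → Finset V) (v : Fin m) :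
    Finset V :=
  (Finset.univ.filter (IsAncestor parent v)).biUnion χ

theorem mem_cone {v : Fin m} {x : V} :
    x ∈ cone parent χ v ↔ ∃ w, IsAncestor parent v w ∧ x ∈ χ w := by
  simp [cone]

theorem bag_subset_cone_of_isAncestor {v w : Fin m} (h : IsAncestor parent v w) :
    χ w ⊆ cone parent χ v :=
  fun _ hx => mem_cone.2 ⟨w, h, hx⟩

theorem bag_subset_cone (v : Fin m) : χ v ⊆ cone parent χ v :=
  bag_subset_cone_of_isAncestor (isAncestor_refl v)

theorem cone_subset_of_isAncestor {v w : Fin m} (h : IsAncestor parent v w) :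
    cone parent χ w ⊆ cone parent χ v := fun _ hx => by
  obtain ⟨u, hu, hxu⟩ := mem_cone.1 hx
  exact mem_cone.2 ⟨u, h.trans hu, hxu⟩

variable [NeZero m]

theorem mem_cone_zero (hpar : ∀ i : Fin m, i ≠ 0 → parent i < i)
    (hcovV : ∀ x : V, ∃ u, x ∈ χ u) (x : V) : x ∈ cone parent χ 0 := by
  obtain ⟨u, hu⟩ := hcovV x
  exact mem_cone.2 ⟨u, isAncestor_zero hpar u, hu⟩

theorem exists_mem_cone_child_of_not_mem_bag (hroot : parent 0 = 0) {v : Fin m} {x : V}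
    (hx : x ∈ cone parent χ v) (hxv : x ∉ χ v) :
    ∃ c : treeChildren parent v, x ∈ cone parent χ c := by
  obtain ⟨w, hw, hxw⟩ := mem_cone.1 hx
  rcases eq_or_exists_mem_treeChildren_of_isAncestor hroot hw with rfl | ⟨c, hc, hcw⟩
  · exact absurd hxw hxv
  · exact ⟨⟨c, hc⟩, mem_cone.2 ⟨w, hcw, hxw⟩⟩

variable (hconn : ∀ (x : V) (u w z : Fin m), x ∈ χ u → x ∈ χ w → OnPath parent u w z → x ∈ χ z)
include hconn

theorem mem_adhesion_of_mem_bag_of_mem_bag {c u w : Fin m} (hc : c ≠ 0) {x : V}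
    (hu : IsAncestor parent c u) (hxu : x ∈ χ u) (hw : ¬IsAncestor parent c w) (hxw : x ∈ χ w) :
    x ∈ adhesion parent χ c := by
  have common : ∀ z, IsAncestor parent z u → IsAncestor parent z w →
      z ≠ c ∧ IsAncestor parent z c := by
    intro z hzu hzw
    rcases hzu.total hu with h | h
    · exact ⟨by rintro rfl; exact hw hzw, h⟩
    · exact absurd (h.trans hzw) hw
  have hxc : x ∈ χ c := hconn x u w c hxu hxw ⟨.inl hu, fun z hzu hzw => (common z hzu hzw).2⟩
  have hxp : x ∈ χ (parent c) := by
    refine hconn x u w _ hxu hxw ⟨.inl ((isAncestor_parent c).trans hu), fun z hzu hzw => ?_⟩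
    obtain ⟨hzc, _ | k, hk⟩ := common z hzu hzw
    · exact absurd hk.symm hzc
    · exact ⟨k, hk⟩
  rw [adhesion, if_neg hc]
  exact Finset.mem_inter.2 ⟨hxc, hxp⟩

theorem mem_adhesion_of_mem_cone_of_mem_bag (hroot : parent 0 = 0)
    (hpar : ∀ i : Fin m, i ≠ 0 → parent i < i) {v c : Fin m} (hc : c ∈ treeChildren parent v)
    {x : V} (hxc : x ∈ cone parent χ c) (hxv : x ∈ χ v) : x ∈ adhesion parent χ c := by
  obtain ⟨u, hu, hxu⟩ := mem_cone.1 hxc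
  exact mem_adhesion_of_mem_bag_of_mem_bag hconn (mem_treeChildren.1 hc).2 hu hxu
    (not_isAncestor_of_mem_treeChildren hroot hpar hc) hxv

theorem mem_bag_of_mem_cone_of_mem_cone (hroot : parent 0 = 0)
    (hpar : ∀ i : Fin m, i ≠ 0 → parent i < i) {v c₁ c₂ : Fin m}
    (hc₁ : c₁ ∈ treeChildren parent v) (hc₂ : c₂ ∈ treeChildren parent v) (hne : c₁ ≠ c₂)
    {x : V} (hx₁ : x ∈ cone parent χ c₁) (hx₂ : x ∈ cone parent χ c₂) : x ∈ χ v := by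
  obtain ⟨u, hu, hxu⟩ := mem_cone.1 hx₁
  obtain ⟨w, hw, hxw⟩ := mem_cone.1 hx₂
  have hx := mem_adhesion_of_mem_bag_of_mem_bag hconn (mem_treeChildren.1 hc₁).2 hu hxu
    (fun h => hne (eq_of_isAncestor_of_mem_treeChildren hroot hpar hc₁ hc₂ h hw)) hxw
  exact adhesion_child_subset parent χ (mem_treeChildren.1 hc₁).1 (mem_treeChildren.1 hc₁).2 hx

end Cone

section Gluing

variable {V A : Type} [DecidableEq V] {m : ℕ} [NeZero m] {parent : Fin m → Fin m}
  {χ : Fin m → Finset V}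

noncomputable def glue (hroot : parent 0 = 0) {v : Fin m} (b : {x // x ∈ χ v} → A)
    (p : ∀ c : treeChildren parent v, {x // x ∈ cone parent χ c} → A) :
    {x // x ∈ cone parent χ v} → A := fun x =>
  if hx : x.1 ∈ χ v then b ⟨x, hx⟩
  else
    p (exists_mem_cone_child_of_not_mem_bag hroot x.2 hx).choose
      ⟨x, (exists_mem_cone_child_of_not_mem_bag hroot x.2 hx).choose_spec⟩

theorem glue_apply_of_mem_bag (hroot : parent 0 = 0) {v : Fin m} (b : {x // x ∈ χ v} → A)
    (p : ∀ c : treeChildren parent v, {x // x ∈ cone parent χ c} → A)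
    (x : {x // x ∈ cone parent χ v}) (hx : x.1 ∈ χ v) : glue hroot b p x = b ⟨x, hx⟩ :=
  dif_pos hx

theorem glue_apply_of_mem_cone
    (hconn : ∀ (x : V) (u w z : Fin m), x ∈ χ u → x ∈ χ w → OnPath parent u w z → x ∈ χ z)
    (hroot : parent 0 = 0) (hpar : ∀ i : Fin m, i ≠ 0 → parent i < i) {v : Fin m}
    (b : {x // x ∈ χ v} → A) (p : ∀ c : treeChildren parent v, {x // x ∈ cone parent χ c} → A)
    (hp : ∀ c : treeChildren parent v,
      restrict ((adhesion_subset parent χ c).trans (bag_subset_cone c.1)) (p c) =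
        restrict (adhesion_child_subset parent χ (mem_treeChildren.1 c.2).1
          (mem_treeChildren.1 c.2).2) b)
    (c : treeChildren parent v) {x : V} (hx : x ∈ cone parent χ c) :
    glue hroot b p ⟨x, cone_subset_of_isAncestor (isAncestor_of_mem_treeChildren c.2) hx⟩ =
      p c ⟨x, hx⟩ := by
  by_cases hxv : x ∈ χ v
  · rw [glue_apply_of_mem_bag hroot b p _ hxv]
    exact (congrFun (hp c)
      ⟨x, mem_adhesion_of_mem_cone_of_mem_bag hconn hroot hpar c.2 hx hxv⟩).symm
  · -- the child chosen by `glue` is `c`, since distinct children's cones meet only inside `χ v`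
    have hex := exists_mem_cone_child_of_not_mem_bag hroot
      (cone_subset_of_isAncestor (isAncestor_of_mem_treeChildren c.2) hx) hxv
    have key : ∀ (d : treeChildren parent v) (hd : x ∈ cone parent χ d),
        d = c → p d ⟨x, hd⟩ = p c ⟨x, hx⟩ := by
      rintro d hd rfl
      rfl
    refine (dif_neg hxv).trans (key _ _ ?_)
    by_contra hne
    exact hxv (mem_bag_of_mem_cone_of_mem_cone hconn hroot hpar hex.choose.2 c.2
      (fun h => hne (Subtype.ext h)) hex.choose_spec hx)

end Gluing

section PartialSolutions

open scoped Finset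

variable {V A ι : Type} [DecidableEq V] [Fintype A] {C : ι → Constraint V A} {m : ℕ}
  [NeZero m] {parent : Fin m → Fin m} {χ : Fin m → Finset V} {home : ι → Fin m}
  {hhome : ∀ j, (C j).scope ⊆ χ (home j)}

noncomputable def partialSolutions (C : ι → Constraint V A) (parent : Fin m → Fin m)
    (χ : Fin m → Finset V) (home : ι → Fin m) (hhome : ∀ j, (C j).scope ⊆ χ (home j))
    (v : Fin m) (τ : {x // x ∈ adhesion parent χ v} → A) :
    Finset ({x // x ∈ cone parent χ v} → A) :=
  Finset.univ.filter fun g =>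
    restrict ((adhesion_subset parent χ v).trans (bag_subset_cone v)) g = τ ∧
      ∀ j (hj : IsAncestor parent v (home j)),
        restrict ((hhome j).trans (bag_subset_cone_of_isAncestor hj)) g ∈ (C j).rel

theorem mem_partialSolutions {v : Fin m} {τ : {x // x ∈ adhesion parent χ v} → A}
    {g : {x // x ∈ cone parent χ v} → A} :
    g ∈ partialSolutions C parent χ home hhome v τ ↔
      restrict ((adhesion_subset parent χ v).trans (bag_subset_cone v)) g = τ ∧
        ∀ j (hj : IsAncestor parent v (home j)),
          restrict ((hhome j).trans (bag_subset_cone_of_isAncestor hj)) g ∈ (C j).rel := by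
  simp [partialSolutions]

theorem restrict_mem_partialSolutions_child {v c : Fin m} (hc : c ∈ treeChildren parent v)
    {τ : {x // x ∈ adhesion parent χ v} → A} {g : {x // x ∈ cone parent χ v} → A}
    (hg : g ∈ partialSolutions C parent χ home hhome v τ) :
    restrict (cone_subset_of_isAncestor (isAncestor_of_mem_treeChildren hc)) g ∈
      partialSolutions C parent χ home hhome c
        (restrict (adhesion_child_subset parent χ (mem_treeChildren.1 hc).1
          (mem_treeChildren.1 hc).2) (restrict (bag_subset_cone v) g)) :=
  mem_partialSolutions.2 ⟨rfl, fun j hj =>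
    (mem_partialSolutions.1 hg).2 j ((isAncestor_of_mem_treeChildren hc).trans hj)⟩

theorem card_partialSolutions_fiber_eq_zero {v : Fin m}
    {τ : {x // x ∈ adhesion parent χ v} → A} {b : {x // x ∈ χ v} → A}
    (hb : ¬(restrict (adhesion_subset parent χ v) b = τ ∧
      ∀ j (hj : home j = v), restrict (hj ▸ hhome j) b ∈ (C j).rel)) :
    #{g ∈ partialSolutions C parent χ home hhome v τ | restrict (bag_subset_cone v) g = b} = 0 := by
  rw [Finset.card_eq_zero, Finset.filter_eq_empty_iff]
  rintro g hg rfl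
  obtain ⟨hgτ, hgC⟩ := mem_partialSolutions.1 hg
  exact hb ⟨hgτ, fun j hj => hgC j (by rw [hj]; exact isAncestor_refl v)⟩

theorem card_partialSolutions_zero [Fintype V] (hpar : ∀ i : Fin m, i ≠ 0 → parent i < i)
    (hcovV : ∀ x : V, ∃ u, x ∈ χ u) (τ : {x // x ∈ adhesion parent χ 0} → A) :
    #(partialSolutions C parent χ home hhome 0 τ) = #{f | IsSolution C f} := by
  refine Finset.card_nbij' (fun g x => g ⟨x, mem_cone_zero hpar hcovV x⟩) (fun f x => f x)
    ?_ ?_ (fun _ _ => rfl) (fun _ _ => rfl)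
  · intro g hg
    exact Finset.mem_filter.2
      ⟨Finset.mem_univ _, fun j => (mem_partialSolutions.1 hg).2 j (isAncestor_zero hpar _)⟩
  · intro f hf
    refine mem_partialSolutions.2 ⟨funext fun x => absurd x.2 ?_,
      fun j _ => (Finset.mem_filter.1 hf).2 j⟩
    simp [adhesion]

section Connected

variable
  (hconn : ∀ (x : V) (u w z : Fin m), x ∈ χ u → x ∈ χ w → OnPath parent u w z → x ∈ χ z)
  (hroot : parent 0 = 0) (hpar : ∀ i : Fin m, i ≠ 0 → parent i < i)
include hconn hroot hpar

theorem glue_mem_partialSolutions {v : Fin m}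
    {τ : {x // x ∈ adhesion parent χ v} → A} {b : {x // x ∈ χ v} → A}
    (hbτ : restrict (adhesion_subset parent χ v) b = τ)
    (hbC : ∀ j (hj : home j = v), restrict (hj ▸ hhome j) b ∈ (C j).rel)
    {p : ∀ c : treeChildren parent v, {x // x ∈ cone parent χ c} → A}
    (hp : ∀ c : treeChildren parent v, p c ∈ partialSolutions C parent χ home hhome c
      (restrict (adhesion_child_subset parent χ (mem_treeChildren.1 c.2).1
        (mem_treeChildren.1 c.2).2) b)) :
    glue hroot b p ∈ partialSolutions C parent χ home hhome v τ := by
  refine mem_partialSolutions.2 ⟨?_, fun j hj => ?_⟩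
  · rw [← hbτ]
    exact funext fun x => glue_apply_of_mem_bag hroot b p _ _
  rcases eq_or_exists_mem_treeChildren_of_isAncestor hroot hj with hjv | ⟨c, hc, hcj⟩
  · convert hbC j hjv using 1
    exact funext fun x => glue_apply_of_mem_bag hroot b p _ _
  · convert (mem_partialSolutions.1 (hp ⟨c, hc⟩)).2 j hcj using 1
    exact funext fun x => glue_apply_of_mem_cone hconn hroot hpar b p
      (fun d => (mem_partialSolutions.1 (hp d)).1) ⟨c, hc⟩ _

theorem card_partialSolutions_fiber_eq_prod {v : Fin m}
    {τ : {x // x ∈ adhesion parent χ v} → A} {b : {x // x ∈ χ v} → A}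
    (hbτ : restrict (adhesion_subset parent χ v) b = τ)
    (hbC : ∀ j (hj : home j = v), restrict (hj ▸ hhome j) b ∈ (C j).rel) :
    #{g ∈ partialSolutions C parent χ home hhome v τ | restrict (bag_subset_cone v) g = b} =
      ∏ c ∈ (treeChildren parent v).attach, #(partialSolutions C parent χ home hhome c
        (restrict (adhesion_child_subset parent χ (mem_treeChildren.1 c.2).1
          (mem_treeChildren.1 c.2).2) b)) := by
  rw [← Finset.univ_eq_attach, ← Fintype.card_piFinset]
  refine Finset.card_nbij'
    (fun g c => restrict (cone_subset_of_isAncestor (isAncestor_of_mem_treeChildren c.2)) g)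
    (glue hroot b) ?_ ?_ ?_ ?_
  · intro g hgb
    obtain ⟨hg, rfl⟩ := Finset.mem_filter.1 hgb
    exact Fintype.mem_piFinset.2 fun c => restrict_mem_partialSolutions_child c.2 hg
  · intro p hp
    exact Finset.mem_filter.2 ⟨glue_mem_partialSolutions hconn hroot hpar hbτ hbC
      (Fintype.mem_piFinset.1 hp), funext fun x => glue_apply_of_mem_bag hroot b p _ x.2⟩
  · intro g hg
    obtain ⟨-, rfl⟩ := Finset.mem_filter.1 hg
    funext x
    by_cases hx : x.1 ∈ χ v
    · exact glue_apply_of_mem_bag hroot _ _ x hx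
    · exact dif_neg hx
  · intro p hp
    funext c x
    exact glue_apply_of_mem_cone hconn hroot hpar b p
      (fun d => (mem_partialSolutions.1 (Fintype.mem_piFinset.1 hp d)).1) c x.2

theorem cnt_eq_card_partialSolutions [Fintype V] [Fintype ι] (v : Fin m)
    (τ : {x // x ∈ adhesion parent χ v} → A) :
    cnt C parent hpar χ home hhome v τ = #(partialSolutions C parent χ home hhome v τ) := by
  rw [cnt, Finset.card_eq_sum_card_fiberwise (f := restrict (bag_subset_cone v))
    (t := Finset.univ) fun _ _ => Finset.mem_coe.2 (Finset.mem_univ _)]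
  refine Finset.sum_congr rfl fun b _ => ?_
  split_ifs with hb
  · rw [card_partialSolutions_fiber_eq_prod hconn hroot hpar hb.1 hb.2]
    exact Finset.prod_congr rfl fun c _ => cnt_eq_card_partialSolutions c _
  · exact (card_partialSolutions_fiber_eq_zero hb).symm
termination_by m - v.1
decreasing_by
  have := lt_of_mem_treeChildren hpar c.2
  omega

end Connected

end PartialSolutions

/-- for a tree decomposition `(t, χ)` of `C` with a homing function for
the constraints, `cnt(root, ∅)` equals the total number of solutions of `C`. -/
theorem stmt8 {V A ι : Type} [Fintype V] [DecidableEq V] [Fintype A] [Fintype ι]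
    (C : ι → Constraint V A)
    {m : ℕ} [NeZero m] (parent : Fin m → Fin m) (χ : Fin m → Finset V)
    (hroot : parent 0 = 0)
    (hpar : ∀ i : Fin m, i ≠ 0 → parent i < i)
    (hcovV : ∀ x : V, ∃ u, x ∈ χ u)
    (hconn : ∀ (x : V) (u w z : Fin m), x ∈ χ u → x ∈ χ w →
      OnPath parent u w z → x ∈ χ z)
    (home : ι → Fin m) (hhome : ∀ j, (C j).scope ⊆ χ (home j)) :
    cnt C parent hpar χ home hhome 0
        (fun x =>
          absurd x.2 (by
            have : adhesion parent χ (0 : Fin m) = ∅ := by unfold adhesion; simp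
            exact fun h => Finset.notMem_empty (x : V) (by rw [← this]; exact h))) =
      Nat.card {f : V → A // IsSolution C f} := by
  rw [cnt_eq_card_partialSolutions hconn hroot hpar, card_partialSolutions_zero hpar hcovV,
    Nat.card_eq_fintype_card, Fintype.card_subtype]
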